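/- arXiv:1608.06462 — 2 statements merged into one kernel-verified Lean document; each statement's English description precedes it below -/
import Mathlib

section
/- Let G be a flow graph with start vertex s and let (x,y) be an edge inserted with x and y reachable. A vertex v is affected by the insertion (i.e., its immediate dominator changes) if and only if depth(nca(x,y)) < depth(d(v)) and there exists a path from y to v in G all of whose vertices w satisfy depth(w) > depth(d(v)). Moreover, if v is affected, its new immediate dominator is nca(x,y). -/
open scoped Classical

namespace Dominators

variable {V : Type*}

/-- A walk in a digraph `E` from `u` to `w`, recorded as the list of its vertices. -/
inductive Walk (E : V → V → Prop) : V → V → List V → Prop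
  | nil (v : V) : Walk E v v [v]
  | cons {u v w : V} {p : List V} (h : E u v) (hw : Walk E v w p) : Walk E u w (u :: p)

/-- `v` is reachable from `s` in the flow graph `(E, s)`. -/
def Reachable (E : V → V → Prop) (s v : V) : Prop := ∃ p, Walk E s v p

/-- `v` dominates `w` in the flow graph `(E, s)`: every walk from `s` to `w` contains `v`.
In the dominator tree `D`, `v` is an ancestor of `w` iff `v` dominates `w`. -/
def Dom (E : V → V → Prop) (s v w : V) : Prop := ∀ p, Walk E s w p → v ∈ p

/-- `v` is the immediate dominator of `w` (the parent of `w` in the dominator tree):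
a proper dominator of `w` that is dominated by every proper dominator of `w`. -/
def IsIdom (E : V → V → Prop) (s v w : V) : Prop :=
  v ≠ w ∧ Dom E s v w ∧ ∀ u, u ≠ w → Dom E s u w → Dom E s u v

/-- `z` is the nearest common ancestor of `x` and `y` in the dominator tree of `(E, s)`. -/
def IsNca (E : V → V → Prop) (s z x y : V) : Prop :=
  Dom E s z x ∧ Dom E s z y ∧ ∀ u, Dom E s u x → Dom E s u y → Dom E s u z

/-- The graph obtained from `E` by inserting the edge `(x, y)`. -/
def Ins (E : V → V → Prop) (x y : V) : V → V → Prop := fun a b => E a b ∨ (a = x ∧ b = y)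

/-- `v` is affected by the insertion of edge `(x, y)`: its immediate dominator
(parent in the dominator tree) changes. -/
def Affected (E : V → V → Prop) (s x y v : V) : Prop :=
  ∃ a b, IsIdom E s a v ∧ IsIdom (Ins E x y) s b v ∧ a ≠ b

/-- `depth` is a depth function for the dominator tree of `(E, s)`. -/
def IsDepth (E : V → V → Prop) (s : V) (depth : V → ℕ) : Prop :=
  depth s = 0 ∧ ∀ v u, Reachable E s v → v ≠ s → IsIdom E s u v → depth v = depth u + 1

/-- `δ` is a preorder of the dominator tree of `(E, s)`: it is injective on reachable
vertices, every vertex precedes (or equals) its descendants, and the descendants of every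
vertex are consecutive. -/
def IsPreorderOfD (E : V → V → Prop) (s : V) (δ : V → ℕ) : Prop :=
  (∀ u v, Reachable E s u → Reachable E s v → u ≠ v → δ u ≠ δ v) ∧
  (∀ v u, Reachable E s u → Dom E s v u → δ v ≤ δ u) ∧
  (∀ v a b, Reachable E s b → Dom E s v a → δ v ≤ δ b → δ b ≤ δ a → Dom E s v b)

/-- `δ` is a low-high order for the vertex `v` in `(E, s)`: either the edge from the
parent `d(v)` of `v` in the dominator tree is in `E`, or `v` has two entering edges
`(u, v)` and `(w, v)` with `u`, `w` reachable, `u <_δ v <_δ w`, and `w` not a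
descendant of `v` in the dominator tree. -/
def LowHighFor (E : V → V → Prop) (s : V) (δ : V → ℕ) (v : V) : Prop :=
  (∃ q, IsIdom E s q v ∧ E q v) ∨
  ∃ u w, E u v ∧ E w v ∧ Reachable E s u ∧ Reachable E s w ∧
    δ u < δ v ∧ δ v < δ w ∧ ¬ Dom E s v w

/-- `δ` is a low-high order of the flow graph `(E, s)`. -/
def IsLowHigh (E : V → V → Prop) (s : V) (δ : V → ℕ) : Prop :=
  IsPreorderOfD E s δ ∧ ∀ v, Reachable E s v → v ≠ s → LowHighFor E s δ v

/-- The edge relation of the spanning tree with parent function `par`, rooted at `s`,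
on the vertices reachable in `(E, s)`. -/
def TreeRel (E : V → V → Prop) (s : V) (par : V → V) : V → V → Prop :=
  fun a b => Reachable E s b ∧ b ≠ s ∧ par b = a

/-- `par` is (the parent function of) a spanning tree of the flow graph `(E, s)`. -/
def IsSpanningTree (E : V → V → Prop) (s : V) (par : V → V) : Prop :=
  (∀ v, Reachable E s v → v ≠ s → E (par v) v) ∧
  (∀ v, Reachable E s v → ∃ p, Walk (TreeRel E s par) s v p)

/-- The spanning trees with parent functions `b` and `r` are divergent: for every
reachable `v`, the tree paths from `s` to `v` share only the dominators of `v`. -/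
def Divergent (E : V → V → Prop) (s : V) (b r : V → V) : Prop :=
  ∀ v p q, Reachable E s v → Walk (TreeRel E s b) s v p → Walk (TreeRel E s r) s v q →
    ∀ u, u ∈ p → u ∈ q → Dom E s u v

section Lemmas

variable {E : V → V → Prop} {s x y : V}

lemma walk_cons_eq {a w : V} {p : List V} (h : Walk E a w p) : ∃ t, p = a :: t := by
  cases h with
  | nil v => exact ⟨[], rfl⟩
  | cons h hw => exact ⟨_, rfl⟩

lemma start_mem {a w : V} {p : List V} (h : Walk E a w p) : a ∈ p := by
  obtain ⟨t, rfl⟩ := walk_cons_eq h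
  exact List.mem_cons_self

lemma end_mem {a w : V} {p : List V} (h : Walk E a w p) : w ∈ p := by
  induction h with
  | nil v => simp
  | cons h hw ih => exact List.mem_cons_of_mem _ ih

lemma walk_length_pos {a w : V} {p : List V} (h : Walk E a w p) : 1 ≤ p.length := by
  cases h with
  | nil v => simp
  | cons h hw => simp

lemma walk_length_two {a w : V} {p : List V} (h : Walk E a w p) (hne : a ≠ w) :
    2 ≤ p.length := by
  cases h with
  | nil v => exact absurd rfl hne
  | @cons u v w p h hw =>
    have := walk_length_pos hw
    simp only [List.length_cons]
    omega

lemma walk_append : ∀ {a b : V} {p : List V}, Walk E a b p →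
    ∀ {c : V} {q : List V}, Walk E b c q → Walk E a c (p ++ q.tail) := by
  intro a b p hp
  induction hp with
  | nil v =>
    intro c q hq
    obtain ⟨t, rfl⟩ := walk_cons_eq hq
    simpa using hq
  | cons h hw ih =>
    intro c q hq
    exact Walk.cons h (ih hq)

lemma walk_split {a w u : V} {p : List V} (h : Walk E a w p) (hu : u ∈ p) :
    ∃ p₁ p₂, Walk E a u p₁ ∧ Walk E u w p₂ ∧ p = p₁ ++ p₂.tail := by
  induction h with
  | nil v =>
    rcases List.mem_singleton.mp hu with rfl
    exact ⟨[u], [u], Walk.nil u, Walk.nil u, by simp⟩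
  | @cons u₀ v₀ w₀ p' h hw ih =>
    by_cases he : u = u₀
    · subst he
      exact ⟨[u], u :: p', Walk.nil u, Walk.cons h hw, by simp⟩
    · have hu' : u ∈ p' := by
        rcases List.mem_cons.mp hu with h1 | h1
        · exact absurd h1 he
        · exact h1
      obtain ⟨p₁, p₂, h1, h2, h3⟩ := ih hu'
      exact ⟨u₀ :: p₁, p₂, Walk.cons h h1, h2, by simp [h3]⟩

lemma dom_refl (u : V) : Dom E s u u := fun _ hp => end_mem hp

lemma dom_trans {u w t : V} (h1 : Dom E s u w) (h2 : Dom E s w t) : Dom E s u t := by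
  intro p hp
  obtain ⟨p₁, p₂, hw1, _, rfl⟩ := walk_split hp (h2 p hp)
  exact List.mem_append_left _ (h1 p₁ hw1)

lemma reachable_of_dom {u w : V} (h : Dom E s u w) (hw : Reachable E s w) :
    Reachable E s u := by
  obtain ⟨p, hp⟩ := hw
  obtain ⟨p₁, p₂, hw1, _, _⟩ := walk_split hp (h p hp)
  exact ⟨p₁, hw1⟩

lemma dom_antisymm {u w : V} (h1 : Dom E s u w) (h2 : Dom E s w u)
    (hw : Reachable E s w) : u = w := by
  by_contra hne
  have key : ∀ n (r : List V), Walk E s w r → r.length ≤ n → False := by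
    intro n
    induction n with
    | zero =>
      intro r hr hl
      have := walk_length_pos hr
      omega
    | succ n ih =>
      intro r hr hl
      obtain ⟨r₁, r₂, hw1, hw2, hre⟩ := walk_split hr (h1 r hr)
      obtain ⟨q₁, q₂, hq1, hq2, heq⟩ := walk_split hw1 (h2 r₁ hw1)
      have l1 : 2 ≤ r₂.length := walk_length_two hw2 hne
      have l2 : 2 ≤ q₂.length := walk_length_two hq2 (Ne.symm hne)
      have hlen1 : r₁.length + r₂.tail.length = r.length := by
        rw [hre]; simp [List.length_append]
      have hlen2 : q₁.length + q₂.tail.length = r₁.length := by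
        rw [heq]; simp [List.length_append]
      have ht1 : r₂.tail.length = r₂.length - 1 := List.length_tail
      have ht2 : q₂.tail.length = q₂.length - 1 := List.length_tail
      exact ih q₁ hq1 (by omega)
  obtain ⟨r, hr⟩ := hw
  exact key r.length r hr le_rfl

lemma dom_total {u w v : V} (h1 : Dom E s u v) (h2 : Dom E s w v)
    (hv : Reachable E s v) : Dom E s u w ∨ Dom E s w u := by
  by_contra hc
  push_neg at hc
  obtain ⟨hnuw, hnwu⟩ := hc
  obtain ⟨α, hα, huα⟩ : ∃ p, Walk E s w p ∧ u ∉ p := by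
    by_contra hh; push_neg at hh; exact hnuw fun p hp => hh p hp
  obtain ⟨β, hβ, hwβ⟩ : ∃ p, Walk E s u p ∧ w ∉ p := by
    by_contra hh; push_neg at hh; exact hnwu fun p hp => hh p hp
  have hne : u ≠ w := by rintro rfl; exact hnuw (dom_refl u)
  have key : ∀ n (r₂ : List V), Walk E u v r₂ → r₂.length ≤ n → False := by
    intro n
    induction n with
    | zero =>
      intro r hr hl
      have := walk_length_pos hr
      omega
    | succ n ih =>
      intro r₂ hr₂ hl
      have hwmem : w ∈ r₂ := by
        have hcomp := walk_append hβ hr₂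
        have hmem := h2 _ hcomp
        rcases List.mem_append.mp hmem with h | h
        · exact absurd h hwβ
        · exact List.mem_of_mem_tail h
      obtain ⟨c₁, c₂, hc1, hc2, hc3⟩ := walk_split hr₂ hwmem
      have humem : u ∈ c₂ := by
        have hcomp := walk_append hα hc2
        have hmem := h1 _ hcomp
        rcases List.mem_append.mp hmem with h | h
        · exact absurd h huα
        · exact List.mem_of_mem_tail h
      obtain ⟨e₁, d₂, he1, hd2, hd3⟩ := walk_split hc2 humem
      have l1 : 1 ≤ c₁.length := walk_length_pos hc1
      have l2 : 2 ≤ e₁.length := walk_length_two he1 (Ne.symm hne)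
      have hl1 : c₁.length + c₂.tail.length = r₂.length := by
        rw [hc3]; simp [List.length_append]
      have hl2 : e₁.length + d₂.tail.length = c₂.length := by
        rw [hd3]; simp [List.length_append]
      have t1 : c₂.tail.length = c₂.length - 1 := List.length_tail
      have t2 : d₂.tail.length = d₂.length - 1 := List.length_tail
      have t3 : 1 ≤ d₂.length := walk_length_pos hd2
      have t4 : 1 ≤ c₂.length := walk_length_pos hc2
      exact ih d₂ hd2 (by omega)
  obtain ⟨r, hr⟩ := hv
  obtain ⟨_, r₂, _, hr₂, _⟩ := walk_split hr (h1 r hr)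
  exact key r₂.length r₂ hr₂ le_rfl

lemma exists_idom {w : V} (hw : Reachable E s w) (hws : w ≠ s) :
    ∃ d, IsIdom E s d w := by
  obtain ⟨p, hp⟩ := id hw
  have main : ∀ l : List V, (∃ a ∈ l, Dom E s a w ∧ a ≠ w) →
      ∃ m, (Dom E s m w ∧ m ≠ w) ∧ ∀ u ∈ l, Dom E s u w → u ≠ w → Dom E s u m := by
    intro l
    induction l with
    | nil => rintro ⟨a, ha, _⟩; exact absurd ha (List.not_mem_nil)
    | cons a l ih =>
      intro hex
      by_cases hl : ∃ b ∈ l, Dom E s b w ∧ b ≠ w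
      · obtain ⟨m, hm, hmax⟩ := ih hl
        by_cases hpa : Dom E s a w ∧ a ≠ w
        · rcases dom_total hpa.1 hm.1 hw with h | h
          · refine ⟨m, hm, ?_⟩
            intro u hu h1 h2
            rcases List.mem_cons.mp hu with rfl | hu
            · exact h
            · exact hmax u hu h1 h2
          · refine ⟨a, hpa, ?_⟩
            intro u hu h1 h2
            rcases List.mem_cons.mp hu with rfl | hu
            · exact dom_refl u
            · exact dom_trans (hmax u hu h1 h2) h
        · refine ⟨m, hm, ?_⟩
          intro u hu h1 h2
          rcases List.mem_cons.mp hu with rfl | hu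
          · exact absurd ⟨h1, h2⟩ hpa
          · exact hmax u hu h1 h2
      · obtain ⟨a', ha', hpa'⟩ := hex
        have haa : a' = a := by
          rcases List.mem_cons.mp ha' with h | h
          · exact h
          · exact absurd ⟨a', h, hpa'⟩ hl
        subst haa
        refine ⟨a', hpa', ?_⟩
        intro u hu h1 h2
        rcases List.mem_cons.mp hu with rfl | hu
        · exact dom_refl u
        · exact absurd ⟨u, hu, h1, h2⟩ hl
  obtain ⟨m, hm, hmax⟩ :=
    main p ⟨s, start_mem hp, fun q hq => start_mem hq, Ne.symm hws⟩
  refine ⟨m, hm.2, hm.1, ?_⟩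
  intro u hne hdom
  exact hmax u (hdom p hp) hdom hne

lemma depth_lt {depth : V → ℕ} (hdep : IsDepth E s depth) {u w : V}
    (hdom : Dom E s u w) (hne : u ≠ w) (hw : Reachable E s w) :
    depth u < depth w := by
  suffices H : ∀ n (w u : V), depth w = n → Dom E s u w → u ≠ w →
      Reachable E s w → depth u < depth w from H (depth w) w u rfl hdom hne hw
  intro n
  induction n using Nat.strong_induction_on with
  | _ n ih =>
    intro w u hn hdom hne hw
    by_cases hws : w = s
    · subst hws
      have hmem := hdom _ (Walk.nil _)
      simp at hmem
      exact absurd hmem hne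
    · obtain ⟨d, hd⟩ := exists_idom hw hws
      have hdw : depth w = depth d + 1 := hdep.2 w d hw hws hd
      have hud : Dom E s u d := hd.2.2 u hne hdom
      by_cases hud' : u = d
      · subst hud'; omega
      · have hdr : Reachable E s d := reachable_of_dom hd.2.1 hw
        have := ih (depth d) (by omega) d u rfl hud hud' hdr
        omega

lemma depth_le {depth : V → ℕ} (hdep : IsDepth E s depth) {u w : V}
    (hdom : Dom E s u w) (hw : Reachable E s w) : depth u ≤ depth w := by
  by_cases h : u = w
  · subst h; exact le_rfl
  · exact (depth_lt hdep hdom h hw).le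

lemma walk_ins_mono {a w : V} {p : List V} (h : Walk E a w p) :
    Walk (Ins E x y) a w p := by
  induction h with
  | nil v => exact Walk.nil v
  | cons h _ ih => exact Walk.cons (Or.inl h) ih

lemma dom_of_dom_ins {u w : V} (h : Dom (Ins E x y) s u w) : Dom E s u w :=
  fun p hp => h p (walk_ins_mono hp)

lemma walk_ins_first {a w : V} {l : List V} (h : Walk (Ins E x y) a w l) :
    Walk E a w l ∨ ∃ p q, Walk E a x p ∧ Walk (Ins E x y) y w q ∧ l = p ++ q := by
  induction h with
  | nil v => exact Or.inl (Walk.nil v)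
  | @cons u₀ v₀ w₀ p' h hw ih =>
    rcases h with h | ⟨rfl, rfl⟩
    · rcases ih with ih | ⟨p, q, h1, h2, rfl⟩
      · exact Or.inl (Walk.cons h ih)
      · exact Or.inr ⟨u₀ :: p, q, Walk.cons h h1, h2, rfl⟩
    · exact Or.inr ⟨[u₀], p', Walk.nil u₀, hw, rfl⟩

lemma walk_ins_last {a w : V} {l : List V} (h : Walk (Ins E x y) a w l) :
    Walk E a w l ∨ ∃ p q, Walk (Ins E x y) a x p ∧ Walk E y w q ∧ l = p ++ q := by
  induction h with
  | nil v => exact Or.inl (Walk.nil v)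
  | @cons u₀ v₀ w₀ p' h hw ih =>
    rcases ih with ih | ⟨p, q, h1, h2, rfl⟩
    · rcases h with h | ⟨rfl, rfl⟩
      · exact Or.inl (Walk.cons h ih)
      · exact Or.inr ⟨[u₀], p', Walk.nil u₀, ih, rfl⟩
    · exact Or.inr ⟨u₀ :: p, q, Walk.cons h h1, h2, rfl⟩

lemma dom_ins_iff (hx : Reachable E s x) {u w : V} :
    Dom (Ins E x y) s u w ↔
      Dom E s u w ∧ (Dom E s u x ∨ ∀ q, Walk E y w q → u ∈ q) := by
  constructor
  · intro h
    refine ⟨dom_of_dom_ins h, ?_⟩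
    by_cases hux : Dom E s u x
    · exact Or.inl hux
    · right
      obtain ⟨p₀, hp₀, hup₀⟩ : ∃ p, Walk E s x p ∧ u ∉ p := by
        by_contra hh; push_neg at hh; exact hux fun p hp => hh p hp
      intro q hq
      have h1 : Walk (Ins E x y) x w (x :: q) :=
        Walk.cons (Or.inr ⟨rfl, rfl⟩) (walk_ins_mono hq)
      have hcomp : Walk (Ins E x y) s w (p₀ ++ q) := by
        have := walk_append (walk_ins_mono hp₀) h1
        simpa using this
      have hmem := h _ hcomp
      rcases List.mem_append.mp hmem with h2 | h2
      · exact absurd h2 hup₀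
      · exact h2
  · rintro ⟨hd, hor⟩ l hl
    rcases walk_ins_first hl with h | ⟨p₁, q₁, hp₁, hq₁, heq1⟩
    · exact hd l h
    rcases walk_ins_last hl with h | ⟨p₂, q₂, hp₂, hq₂, heq2⟩
    · exact hd l h
    rcases hor with h | h
    · rw [heq1]; exact List.mem_append_left _ (h p₁ hp₁)
    · rw [heq2]; exact List.mem_append_right _ (h q₂ hq₂)

end Lemmas

/-- `v` is affected by the insertion of `(x,y)` (its immediate dominator
changes, `dv' ≠ dv`) iff `depth (nca x y) < depth (d v)` and there is a path from `y`
to `v` in `G` all of whose vertices `w` satisfy `depth w > depth (d v)`. Moreover, if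
`v` is affected, its new immediate dominator is `nca(x,y)`. -/
theorem stmt4 (E : V → V → Prop) (s x y v z dv dv' : V) (depth : V → ℕ)
    (hdep : IsDepth E s depth)
    (hx : Reachable E s x) (hy : Reachable E s y)
    (hv : Reachable E s v) (hvs : v ≠ s)
    (hz : IsNca E s z x y)
    (hdv : IsIdom E s dv v) (hdv' : IsIdom (Ins E x y) s dv' v) :
    (dv' ≠ dv ↔
      (depth z < depth dv ∧ ∃ p, Walk E y v p ∧ ∀ w ∈ p, depth dv < depth w)) ∧
    (dv' ≠ dv → dv' = z) := by
  have hdvreach : Reachable E s dv := reachable_of_dom hdv.2.1 hv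
  have hdv'v : Dom E s dv' v := dom_of_dom_ins hdv'.2.1
  have hdv'reach : Reachable E s dv' := reachable_of_dom hdv'v hv
  have hdv'dv : Dom E s dv' dv := hdv.2.2 dv' hdv'.1 hdv'v
  have hzreach : Reachable E s z := reachable_of_dom hz.1 hx
  have main : dv' ≠ dv →
      (depth z < depth dv ∧ ∃ p, Walk E y v p ∧ ∀ w ∈ p, depth dv < depth w) ∧
        dv' = z := by
    intro h
    have hndom' : ¬ Dom (Ins E x y) s dv v := by
      intro hc
      have h1 : Dom E s dv dv' := dom_of_dom_ins (hdv'.2.2 dv hdv.1 hc)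
      exact h (dom_antisymm hdv'dv h1 hdvreach)
    rw [dom_ins_iff hx] at hndom'
    have hnor : ¬ (Dom E s dv x ∨ ∀ q, Walk E y v q → dv ∈ q) :=
      fun hc => hndom' ⟨hdv.2.1, hc⟩
    have hndvx : ¬ Dom E s dv x := fun hc => hnor (Or.inl hc)
    obtain ⟨q, hqwalk, hdvq⟩ : ∃ q, Walk E y v q ∧ dv ∉ q := by
      by_contra hh; push_neg at hh; exact hnor (Or.inr fun q hq => hh q hq)
    have hdomq : ∀ w ∈ q, Dom E s dv w := by
      intro w hwq r hr
      obtain ⟨q₁, q₂, hq1, hq2, heq⟩ := walk_split hqwalk hwq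
      have hmem := hdv.2.1 _ (walk_append hr hq2)
      rcases List.mem_append.mp hmem with h1 | h1
      · exact h1
      · exact absurd (by rw [heq]; exact List.mem_append_right _ h1) hdvq
    have hreachq : ∀ w ∈ q, Reachable E s w := by
      intro w hwq
      obtain ⟨q₁, _, hq1, _, _⟩ := walk_split hqwalk hwq
      obtain ⟨r, hr⟩ := hy
      exact ⟨r ++ q₁.tail, walk_append hr hq1⟩
    have hdepthq : ∀ w ∈ q, depth dv < depth w := by
      intro w hwq
      refine depth_lt hdep (hdomq w hwq) ?_ (hreachq w hwq)
      intro hc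
      exact hdvq (by rw [hc]; exact hwq)
    have hdvy : Dom E s dv y := hdomq y (start_mem hqwalk)
    have hdv'y : Dom E s dv' y := dom_trans hdv'dv hdvy
    have hdv'x : Dom E s dv' x := by
      have h2 := (dom_ins_iff hx).mp hdv'.2.1
      rcases h2.2 with h3 | h3
      · exact h3
      · have h4 : Dom E s dv dv' := hdomq dv' (h3 q hqwalk)
        exact absurd (dom_antisymm hdv'dv h4 hdvreach) h
    have hdv'z : Dom E s dv' z := hz.2.2 dv' hdv'x hdv'y
    have hzdv : Dom E s z dv := by
      rcases dom_total hz.2.1 hdvy hy with h1 | h1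
      · exact h1
      · exact absurd (dom_trans h1 hz.1) hndvx
    have hzne : z ≠ dv := by
      intro hc
      exact hndvx (by rw [← hc]; exact hz.1)
    have hdz : depth z < depth dv := depth_lt hdep hzdv hzne hdvreach
    have hzv : Dom E s z v := dom_trans hzdv hdv.2.1
    have hznev : z ≠ v := by
      intro hc
      have hvdv : Dom E s v dv := by rw [← hc]; exact hzdv
      exact hdv.1 (dom_antisymm hdv.2.1 hvdv hv)
    have hD'zv : Dom (Ins E x y) s z v := (dom_ins_iff hx).mpr ⟨hzv, Or.inl hz.1⟩
    have hzdv' : Dom E s z dv' := dom_of_dom_ins (hdv'.2.2 z hznev hD'zv)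
    exact ⟨⟨hdz, q, hqwalk, hdepthq⟩, dom_antisymm hdv'z hzdv' hzreach⟩
  have back : (depth z < depth dv ∧ ∃ p, Walk E y v p ∧ ∀ w ∈ p, depth dv < depth w) →
      dv' ≠ dv := by
    rintro ⟨hdlt, q, hqwalk, hdq⟩ heq
    have hD'dv : Dom (Ins E x y) s dv v := by rw [← heq]; exact hdv'.2.1
    have h2 := (dom_ins_iff hx).mp hD'dv
    have hdvq : dv ∉ q := fun hc => lt_irrefl _ (hdq dv hc)
    have hdvx : Dom E s dv x := by
      rcases h2.2 with h3 | h3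
      · exact h3
      · exact absurd (h3 q hqwalk) hdvq
    have hdvy : Dom E s dv y := by
      intro r hr
      have hmem := hdv.2.1 _ (walk_append hr hqwalk)
      rcases List.mem_append.mp hmem with h1 | h1
      · exact h1
      · exact absurd (List.mem_of_mem_tail h1) hdvq
    have hdvz : Dom E s dv z := hz.2.2 dv hdvx hdvy
    have := depth_le hdep hdvz hzreach
    omega
  exact ⟨⟨fun h => (main h).1, back⟩, fun h => (main h).2⟩


end Dominators
end

section
/- Let G be a flow graph with start vertex s, dominator tree D, and an inserted edge (x,y) with x,y reachable. Let delta be a low-high order of G and let delta' be any preorder of the updated dominator tree D' that agrees with delta (i.e., for any pair of unaffected siblings u,v in D, u precedes v in delta' iff u precedes v in delta). Then for every reachable vertex v that is neither affected nor a child of nca(x,y) in D, delta' is a low-high order for v in the updated graph G'. -/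
/-!
Inserting `(x, y)` can only destroy dominance. If a dominator `a` of `t` is lost, some new
walk to `t` ends with the new edge followed by an old walk `f` from `y` avoiding `a`; hence `a`
dominates `y` but not `x`, so `z = nca(x, y)` lies strictly above `a` and still dominates `t`.
The new parent `b` of an affected `t` lies above its old parent `a`, which is lost, and `b`
dominates `x` (otherwise it lies on `f`, and then `a` would dominate `b`); so `b` dominates `x`
and `y`, hence `z`, and `b = z`.

Now let `v` be unaffected with parent `q ≠ z`, and `u <_δ v <_δ w` its low-high witnesses.
Unless `u` is an ancestor of `v`, let `c` be the child of `q` in the new tree above `u` (resp.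
`w`). By the first part `c` is an unaffected child of `q` in the old tree, so `δ'` orders `c` and
`v` as `δ` does, and since the descendants of `c` are consecutive in `δ'`, `u` (resp. `w`) falls
on the same side of `v` as `c`.
-/

open scoped Classical

namespace Dominators

variable {V : Type*}

theorem _root_.List.exists_eq_append_cons_notMem_left {α : Type*} {a : α} :
    ∀ {l : List α}, a ∈ l → ∃ l₁ l₂, l = l₁ ++ a :: l₂ ∧ a ∉ l₁
  | b :: l, h => by
    by_cases hab : a = b
    · exact ⟨[], l, by rw [hab]; rfl, List.not_mem_nil⟩
    · obtain ⟨l₁, l₂, rfl, ha⟩ :=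
        List.exists_eq_append_cons_notMem_left ((List.mem_cons.1 h).resolve_left hab)
      exact ⟨b :: l₁, l₂, rfl, by simp [hab, ha]⟩

theorem _root_.List.exists_eq_append_cons_notMem_right {α : Type*} {a : α} {l : List α}
    (h : a ∈ l) : ∃ l₁ l₂, l = l₁ ++ a :: l₂ ∧ a ∉ l₂ := by
  obtain ⟨l₁, l₂, hl, ha⟩ := List.exists_eq_append_cons_notMem_left (List.mem_reverse.2 h)
  exact ⟨l₂.reverse, l₁.reverse, by simpa using congrArg List.reverse hl, by simpa using ha⟩

theorem _root_.List.exists_mem_forall_rel {α : Type*} {r : α → α → Prop}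
    (htrans : ∀ {a b c}, r a b → r b c → r a c) {l : List α} (hl : l ≠ [])
    (htot : ∀ a ∈ l, ∀ b ∈ l, r a b ∨ r b a) : ∃ m ∈ l, ∀ a ∈ l, r a m := by
  induction l with
  | nil => exact absurd rfl hl
  | cons a l ih =>
    rcases eq_or_ne l [] with rfl | hl'
    · exact ⟨a, List.mem_singleton_self a, by simpa using htot a (by simp) a (by simp)⟩
    obtain ⟨m, hm, hmax⟩ := ih hl'
      fun c hc d hd => htot c (List.mem_cons_of_mem a hc) d (List.mem_cons_of_mem a hd)
    rcases htot a List.mem_cons_self m (List.mem_cons_of_mem _ hm) with ham | hma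
    · exact ⟨m, List.mem_cons_of_mem _ hm, List.forall_mem_cons.2 ⟨ham, hmax⟩⟩
    · have haa : r a a := by simpa using htot a List.mem_cons_self a List.mem_cons_self
      exact ⟨a, List.mem_cons_self,
        List.forall_mem_cons.2 ⟨haa, fun c hc => htrans (hmax c hc) hma⟩⟩

namespace Walk

variable {F G : V → V → Prop} {a b c : V} {p q l₁ l₂ : List V}

theorem start_mem (h : Walk F a b p) : a ∈ p := by
  cases h <;> exact List.mem_cons_self

theorem end_mem (h : Walk F a b p) : b ∈ p := by
  induction h with
  | nil => exact List.mem_singleton_self _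
  | cons _ _ ih => exact List.mem_cons_of_mem _ ih

theorem mono (hFG : ∀ a b, F a b → G a b) (h : Walk F a b p) : Walk G a b p := by
  induction h with
  | nil v => exact nil v
  | cons e _ ih => exact cons (hFG _ _ e) ih

theorem append (h : Walk F a b p) (h' : Walk F b c q) : Walk F a c (p ++ q.tail) := by
  induction h with
  | nil =>
    cases h' with
    | nil => exact nil _
    | cons e hw => exact cons e hw
  | cons e _ ih => exact cons e (ih h')

theorem takeUntil (h : Walk F a b (l₁ ++ c :: l₂)) : Walk F a c (l₁ ++ [c]) := by
  generalize hp : l₁ ++ c :: l₂ = p at h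
  induction h generalizing l₁ with
  | nil v =>
    rcases l₁ with _ | ⟨d, l₁⟩
    · obtain ⟨rfl, -⟩ := List.cons.inj hp
      exact nil c
    · simp at hp
  | cons e _ ih =>
    rcases l₁ with _ | ⟨d, l₁⟩
    · obtain ⟨rfl, -⟩ := List.cons.inj hp
      exact nil _
    · obtain ⟨rfl, htail⟩ := List.cons.inj hp
      exact cons e (ih htail)

theorem dropUntil (h : Walk F a b (l₁ ++ c :: l₂)) : Walk F c b (c :: l₂) := by
  generalize hp : l₁ ++ c :: l₂ = p at h
  induction h generalizing l₁ with
  | nil v =>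
    rcases l₁ with _ | ⟨d, l₁⟩
    · obtain ⟨rfl, rfl⟩ := List.cons.inj hp
      exact nil c
    · simp at hp
  | cons e hw ih =>
    rcases l₁ with _ | ⟨d, l₁⟩
    · obtain ⟨rfl, rfl⟩ := List.cons.inj hp
      exact cons e hw
    · exact ih (List.cons.inj hp).2

end Walk

section Dominance

variable {F : V → V → Prop} {s a b c t v : V} {p f : List V}

theorem reachable_of_mem_walk (h : Walk F s b p) (ha : a ∈ p) : Reachable F s a := by
  obtain ⟨l₁, l₂, rfl⟩ := List.append_of_mem ha
  exact ⟨_, h.takeUntil⟩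

theorem dom_refl_s5 : Dom F s v v := fun _ hp => hp.end_mem

theorem dom_start : Dom F s s v := fun _ hp => hp.start_mem

theorem not_dom_iff : ¬ Dom F s a b ↔ ∃ p, Walk F s b p ∧ a ∉ p := by
  simp only [Dom, not_forall, exists_prop]

theorem Dom.reachable (h : Dom F s a b) (hb : Reachable F s b) : Reachable F s a := by
  obtain ⟨p, hp⟩ := hb
  exact reachable_of_mem_walk hp (h p hp)

theorem Dom.trans (hab : Dom F s a b) (hbc : Dom F s b c) : Dom F s a c := by
  intro p hp
  obtain ⟨l₁, l₂, rfl⟩ := List.append_of_mem (hbc p hp)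
  have := hab _ hp.takeUntil
  simp only [List.mem_append, List.mem_singleton] at this
  rcases this with h | rfl <;> simp [*]

theorem Dom.of_walk_notMem (h : Dom F s a t) (hf : Walk F b t f) (ha : a ∉ f) : Dom F s a b :=
  fun _ hr => (List.mem_append.1 (h _ (hr.append hf))).resolve_right
    fun h' => ha (List.mem_of_mem_tail h')

theorem Dom.antisymm (hb : Reachable F s b) (hab : Dom F s a b) (hba : Dom F s b a) : a = b := by
  by_contra hne
  obtain ⟨p, hp⟩ := hb
  obtain ⟨l₁, l₂, rfl, hbl⟩ := List.exists_eq_append_cons_notMem_left hp.end_mem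
  have hal : a ∈ l₁ := by simpa [hne] using hab _ hp.takeUntil
  obtain ⟨m₁, m₂, rfl⟩ := List.append_of_mem hal
  have hwa : Walk F s a (m₁ ++ [a]) :=
    (Walk.takeUntil (l₁ := m₁) (l₂ := m₂ ++ [b]) (by simpa using hp.takeUntil))
  have hbm := hba _ hwa
  simp only [List.mem_append, List.mem_singleton] at hbm
  rcases hbm with h | rfl
  · exact hbl (by simp [h])
  · exact hne rfl

theorem Dom.total (ht : Reachable F s t) (ha : Dom F s a t) (hb : Dom F s b t) :
    Dom F s a b ∨ Dom F s b a := by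
  rcases eq_or_ne a b with rfl | hab
  · exact Or.inl dom_refl_s5
  obtain ⟨p, hp⟩ := ht
  obtain ⟨l₁, l₂, rfl, hbl⟩ := List.exists_eq_append_cons_notMem_right (hb p hp)
  by_cases hal : a ∈ l₂
  · obtain ⟨m₁, m₂, rfl⟩ := List.append_of_mem hal
    have hwt : Walk F a t (a :: m₂) :=
      Walk.dropUntil (l₁ := l₁ ++ b :: m₁) (by simpa using hp)
    exact Or.inr (hb.of_walk_notMem hwt (by simp_all))
  · exact Or.inl (ha.of_walk_notMem hp.dropUntil (by simp [hab, hal]))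

end Dominance

section ImmediateDominator

variable {F : V → V → Prop} {s c q t u v : V} {δ : V → ℕ}

theorem exists_extremal_dom (ht : Reachable F s t) (P : V → Prop) (h : ∃ a, P a ∧ Dom F s a t)
    {r : V → V → Prop} (htrans : ∀ {a b c}, r a b → r b c → r a c)
    (htot : ∀ a b, Dom F s a t → Dom F s b t → r a b ∨ r b a) :
    ∃ m, P m ∧ Dom F s m t ∧ ∀ a, P a → Dom F s a t → r a m := by
  obtain ⟨p, hp⟩ := id ht
  obtain ⟨a, ha, hat⟩ := h
  have hmem (b : V) : b ∈ p.filter (fun b => P b ∧ Dom F s b t) ↔ P b ∧ Dom F s b t := by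
    simpa using fun _ hbt => hbt p hp
  obtain ⟨m, hm, hmax⟩ := List.exists_mem_forall_rel (r := r) htrans
    (List.ne_nil_of_mem ((hmem a).2 ⟨ha, hat⟩))
    fun a ha b hb => htot a b ((hmem a).1 ha).2 ((hmem b).1 hb).2
  obtain ⟨hPm, hmt⟩ := (hmem m).1 hm
  exact ⟨m, hPm, hmt, fun a ha hat => hmax a ((hmem a).2 ⟨ha, hat⟩)⟩

theorem exists_isIdom (hv : Reachable F s v) (hvs : v ≠ s) : ∃ q, IsIdom F s q v := by
  obtain ⟨q, hqv, hq, hmax⟩ :=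
    exists_extremal_dom hv (· ≠ v) ⟨s, hvs.symm, dom_start⟩ Dom.trans fun _ _ => Dom.total hv
  exact ⟨q, hqv, hq, hmax⟩

theorem IsIdom.ne_start (h : IsIdom F s q v) : v ≠ s := by
  rintro rfl
  exact h.1 (List.mem_singleton.1 (h.2.1 _ (Walk.nil v)))

theorem IsIdom.unique {q' : V} (hv : Reachable F s v) (hq : IsIdom F s q v)
    (hq' : IsIdom F s q' v) : q = q' :=
  Dom.antisymm (hq'.2.1.reachable hv) (hq'.2.2 q hq.1 hq.2.1) (hq.2.2 q' hq'.1 hq'.2.1)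

theorem IsIdom.dom_of_edge (hq : IsIdom F s q v) (e : F u v) : Dom F s q u :=
  fun _ hr => (List.mem_append.1 (hq.2.1 _ (hr.append (Walk.cons e (Walk.nil v))))).resolve_right
    (by simpa using hq.1)

theorem IsIdom.not_dom_sibling (hc : IsIdom F s q c) (hv : IsIdom F s q v) (hrv : Reachable F s v)
    (hcv : c ≠ v) : ¬ Dom F s c v := fun h =>
  hc.1 (Dom.antisymm (h.reachable hrv) hc.2.1 (hv.2.2 c hcv h))

theorem IsIdom.exists_sibling_dom (hq : IsIdom F s q v) (ht : Reachable F s t) (hqt : Dom F s q t)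
    (htv : ¬ Dom F s t v) (hvt : ¬ Dom F s v t) :
    ∃ c, IsIdom F s q c ∧ Dom F s c t ∧ ¬ Dom F s c v := by
  obtain ⟨c, hcv, hct, hmax⟩ := exists_extremal_dom ht (¬ Dom F s · v) ⟨t, htv, dom_refl_s5⟩
    (r := fun a b => Dom F s b a) (fun hab hbc => hbc.trans hab) fun a b ha hb => Dom.total ht hb ha
  have hrc : Reachable F s c := hct.reachable ht
  obtain ⟨g, hg⟩ := exists_isIdom hrc fun h => hcv (h ▸ dom_start)
  have hgv : Dom F s g v := by
    by_contra hgv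
    exact hg.1 (Dom.antisymm hrc hg.2.1 (hmax g hgv (hg.2.1.trans hct)))
  have hqc : Dom F s q c := (Dom.total ht hqt hct).resolve_right fun h => hcv (h.trans hq.2.1)
  have hqg : Dom F s q g := hg.2.2 q (fun h => hcv (h ▸ hq.2.1)) hqc
  have hgq : Dom F s g q := hq.2.2 g (fun h => hvt (h ▸ hg.2.1.trans hct)) hgv
  refine ⟨c, ?_, hct, hcv⟩
  rw [Dom.antisymm (hqc.reachable hrc) hgq hqg] at hg
  exact hg

theorem IsPreorderOfD.lt_of_dom_of_not_dom (hδ : IsPreorderOfD F s δ) (hv : Reachable F s v)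
    (hct : Dom F s c t) (hcv : ¬ Dom F s c v) (h : δ c ≤ δ v) : δ t < δ v :=
  lt_of_not_ge fun h' => hcv (hδ.2.2 c t v hv hct h h')

end ImmediateDominator

section Insertion

variable {E : V → V → Prop} {s x y z a b c m q t : V} {p p₁ p₂ : List V}

theorem Walk.ins (h : Walk E a b p) : Walk (Ins E x y) a b p := h.mono fun _ _ => Or.inl

theorem Reachable.ins (h : Reachable E s t) : Reachable (Ins E x y) s t :=
  let ⟨p, hp⟩ := h; ⟨p, hp.ins⟩

theorem Dom.of_ins (h : Dom (Ins E x y) s a b) : Dom E s a b := fun p hp => h p hp.ins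

theorem Walk.ins_append (h₁ : Walk E a x p₁) (h₂ : Walk E y b p₂) :
    Walk (Ins E x y) a b (p₁ ++ p₂) :=
  h₁.ins.append (Walk.cons (Or.inr ⟨rfl, rfl⟩) h₂.ins)

theorem Walk.of_ins_or_first (h : Walk (Ins E x y) a b p) :
    Walk E a b p ∨ ∃ p₁ p₂, p = p₁ ++ p₂ ∧ Walk E a x p₁ := by
  induction h with
  | nil v => exact Or.inl (Walk.nil v)
  | @cons a' _ _ p' e _ ih =>
    rcases e with e | ⟨rfl, -⟩
    · rcases ih with h | ⟨p₁, p₂, rfl, h₁⟩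
      · exact Or.inl (Walk.cons e h)
      · exact Or.inr ⟨a' :: p₁, p₂, rfl, Walk.cons e h₁⟩
    · exact Or.inr ⟨[a'], p', rfl, Walk.nil a'⟩

theorem Walk.of_ins_or_last (h : Walk (Ins E x y) a b p) :
    Walk E a b p ∨ ∃ p₁ p₂, p = p₁ ++ p₂ ∧ Walk E y b p₂ := by
  induction h with
  | nil v => exact Or.inl (Walk.nil v)
  | @cons a' _ _ p' e _ ih =>
    rcases ih with h | ⟨p₁, p₂, rfl, h₂⟩
    · rcases e with e | ⟨-, rfl⟩
      · exact Or.inl (Walk.cons e h)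
      · exact Or.inr ⟨[a'], p', rfl, h⟩
    · exact Or.inr ⟨a' :: p₁, p₂, rfl, h₂⟩

theorem Dom.ins (hx : Dom E s m x) (ht : Dom E s m t) : Dom (Ins E x y) s m t := by
  intro p hp
  rcases hp.of_ins_or_first with h | ⟨p₁, p₂, rfl, h₁⟩
  · exact ht p h
  · exact List.mem_append_left _ (hx p₁ h₁)

theorem Dom.exists_walk_of_not_dom_ins (ht : Dom E s m t) (h : ¬ Dom (Ins E x y) s m t) :
    Dom E s m y ∧ ¬ Dom E s m x ∧ ∃ f, Walk E y t f ∧ m ∉ f := by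
  obtain ⟨p, hp, hmp⟩ := not_dom_iff.1 h
  rcases hp.of_ins_or_last with hpE | ⟨p₁, p₂, rfl, hp₂⟩
  · exact absurd (ht p hpE) hmp
  · have hm₂ : m ∉ p₂ := fun h => hmp (List.mem_append_right _ h)
    exact ⟨ht.of_walk_notMem hp₂ hm₂, fun hx => h (hx.ins ht), p₂, hp₂, hm₂⟩

theorem isIdom_ins_of_affected (hz : IsNca E s z x y) (hy : Reachable E s y)
    (ht : Reachable E s t) (h : Affected E s x y t) : IsIdom (Ins E x y) s z t := by
  obtain ⟨a, b, ha, hb, hab⟩ := h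
  have hbt : Dom E s b t := hb.2.1.of_ins
  have hrb : Reachable E s b := hbt.reachable ht
  have hba : Dom E s b a := ha.2.2 b hb.1 hbt
  have hlost : ¬ Dom (Ins E x y) s a t := fun hat =>
    hab (Dom.antisymm hrb (hb.2.2 a ha.1 hat).of_ins hba)
  obtain ⟨hay, hax, f, hf, haf⟩ := ha.2.1.exists_walk_of_not_dom_ins hlost
  have hza : Dom E s z a := (Dom.total hy hz.2.1 hay).resolve_right fun haz => hax (haz.trans hz.1)
  have hzt : Dom E s z t := hza.trans ha.2.1
  have hzt_ne : z ≠ t := by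
    rintro rfl
    exact ha.1 (Dom.antisymm ht ha.2.1 hza)
  have hzb : Dom E s z b := (hb.2.2 z hzt_ne (hz.1.ins hzt)).of_ins
  have hbx : Dom E s b x := by
    by_contra hbx
    obtain ⟨r, hr, hbr⟩ := not_dom_iff.1 hbx
    have hbf : b ∈ f := by simpa [hbr] using hb.2.1 _ (hr.ins_append hf)
    obtain ⟨f₁, f₂, rfl⟩ := List.append_of_mem hbf
    exact hab (Dom.antisymm hrb (ha.2.1.of_walk_notMem hf.dropUntil fun h => haf (by simp_all)) hba)
  have hbz : b = z := Dom.antisymm (hzt.reachable ht) (hz.2.2 b hbx (hba.trans hay)) hzb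
  exact hbz ▸ hb

theorem isIdom_ins_of_not_affected (ht : Reachable E s t) (hts : t ≠ s)
    (hA : ¬ Affected E s x y t) (hq : IsIdom E s q t) : IsIdom (Ins E x y) s q t := by
  obtain ⟨b, hb⟩ := exists_isIdom ht.ins hts
  by_cases hqb : q = b
  · exact hqb ▸ hb
  · exact absurd ⟨q, b, hq, hb, hqb⟩ hA

theorem isIdom_of_isIdom_ins_of_ne (hz : IsNca E s z x y) (hy : Reachable E s y)
    (hc : Reachable E s c) (hqc : IsIdom (Ins E x y) s q c) (hqz : q ≠ z) :
    IsIdom E s q c ∧ ¬ Affected E s x y c := by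
  have hA : ¬ Affected E s x y c := fun h =>
    hqz (hqc.unique hc.ins (isIdom_ins_of_affected hz hy hc h))
  obtain ⟨a, ha⟩ := exists_isIdom hc hqc.ne_start
  by_cases haq : a = q
  · exact ⟨haq ▸ ha, hA⟩
  · exact absurd ⟨a, q, ha, hqc, haq⟩ hA

end Insertion

def AgreesOnUnaffectedSiblings (E : V → V → Prop) (s x y : V) (δ δ' : V → ℕ) : Prop :=
  ∀ u v q, Reachable E s u → Reachable E s v → u ≠ v →
    ¬ Affected E s x y u → ¬ Affected E s x y v →
    IsIdom E s q u → IsIdom E s q v →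
    (δ' u < δ' v ↔ δ u < δ v)

section LowHigh

variable {E : V → V → Prop} {s x y z q u v w : V} {δ δ' : V → ℕ}

theorem inEdge_lt_of_lt (hz : IsNca E s z x y) (hy : Reachable E s y)
    (hδ : IsPreorderOfD E s δ) (hδ' : IsPreorderOfD (Ins E x y) s δ')
    (hagree : AgreesOnUnaffectedSiblings E s x y δ δ') (hv : Reachable E s v)
    (hA : ¬ Affected E s x y v) (hq : IsIdom E s q v) (hqz : q ≠ z)
    (hu : Reachable E s u) (huv : E u v) (hlt : δ u < δ v) : δ' u < δ' v := by
  have hq' : IsIdom (Ins E x y) s q v := isIdom_ins_of_not_affected hv hq.ne_start hA hq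
  by_cases hud : Dom (Ins E x y) s u v
  · exact (hδ'.2.1 u v hv.ins hud).lt_of_ne
      (hδ'.1 u v hu.ins hv.ins fun h => hlt.ne (congrArg δ h))
  have hvu : ¬ Dom (Ins E x y) s v u := fun h => (hδ.2.1 v u hu h.of_ins).not_gt hlt
  obtain ⟨c, hqc', hcu, hcv⟩ :=
    hq'.exists_sibling_dom hu.ins (hq'.dom_of_edge (Or.inl huv)) hud hvu
  have hc : Reachable E s c := hcu.of_ins.reachable hu
  obtain ⟨hqc, hAc⟩ := isIdom_of_isIdom_ins_of_ne hz hy hc hqc' hqz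
  have hcv_ne : c ≠ v := fun h => hcv (h ▸ dom_refl_s5)
  have hδc : δ c < δ v := (hδ.2.1 c u hu hcu.of_ins).trans_lt hlt
  exact hδ'.lt_of_dom_of_not_dom hv.ins hcu hcv
    ((hagree c v q hc hv hcv_ne hAc hA hqc hq).2 hδc).le

theorem lt_inEdge_of_lt (hz : IsNca E s z x y) (hy : Reachable E s y)
    (hδ : IsPreorderOfD E s δ) (hδ' : IsPreorderOfD (Ins E x y) s δ')
    (hagree : AgreesOnUnaffectedSiblings E s x y δ δ') (hv : Reachable E s v)
    (hA : ¬ Affected E s x y v) (hq : IsIdom E s q v) (hqz : q ≠ z)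
    (hw : Reachable E s w) (hwv : E w v) (hlt : δ v < δ w) (hvw : ¬ Dom E s v w) :
    δ' v < δ' w := by
  have hq' : IsIdom (Ins E x y) s q v := isIdom_ins_of_not_affected hv hq.ne_start hA hq
  have hwd : ¬ Dom (Ins E x y) s w v := fun h => (hδ.2.1 w v hv h.of_ins).not_gt hlt
  obtain ⟨c, hqc', hcw, hcv⟩ :=
    hq'.exists_sibling_dom hw.ins (hq'.dom_of_edge (Or.inl hwv)) hwd fun h => hvw h.of_ins
  have hc : Reachable E s c := hcw.of_ins.reachable hw
  obtain ⟨hqc, hAc⟩ := isIdom_of_isIdom_ins_of_ne hz hy hc hqc' hqz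
  have hcv_ne : c ≠ v := fun h => hcv (h ▸ dom_refl_s5)
  have hδc : δ v < δ c := lt_of_not_ge fun h =>
    lt_asymm hlt (hδ.lt_of_dom_of_not_dom hv hcw.of_ins (hqc.not_dom_sibling hq hv hcv_ne) h)
  exact ((hagree v c q hv hc hcv_ne.symm hA hAc hq hqc).2 hδc).trans_le (hδ'.2.1 c w hw.ins hcw)

end LowHigh

theorem stmt5_general (E : V → V → Prop) (s x y z : V) (δ δ' : V → ℕ)
    (hy : Reachable E s y)
    (hz : IsNca E s z x y)
    (hδ : IsLowHigh E s δ)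
    (hδ' : IsPreorderOfD (Ins E x y) s δ')
    (hagree : ∀ u v q, Reachable E s u → Reachable E s v → u ≠ v →
      ¬ Affected E s x y u → ¬ Affected E s x y v →
      IsIdom E s q u → IsIdom E s q v →
      (δ' u < δ' v ↔ δ u < δ v)) :
    ∀ v, Reachable E s v → v ≠ s → ¬ Affected E s x y v → ¬ IsIdom E s z v →
      LowHighFor (Ins E x y) s δ' v := by
  intro v hv hvs hA hzv
  obtain ⟨q, hq⟩ := exists_isIdom hv hvs
  have hqz : q ≠ z := fun h => hzv (h ▸ hq)
  rcases hδ.2 v hv hvs with ⟨g, hg, hgv⟩ | ⟨u, w, huv, hwv, hu, hw, hlow, hhigh, hvw⟩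
  · exact Or.inl ⟨g, isIdom_ins_of_not_affected hv hvs hA hg, Or.inl hgv⟩
  · exact Or.inr ⟨u, w, Or.inl huv, Or.inl hwv, hu.ins, hw.ins,
      inEdge_lt_of_lt hz hy hδ.1 hδ' hagree hv hA hq hqz hu huv hlow,
      lt_inEdge_of_lt hz hy hδ.1 hδ' hagree hv hA hq hqz hw hwv hhigh hvw,
      fun h => hvw h.of_ins⟩

/-- Let `δ` be a low-high order of `G` and `δ'` a preorder of the updated
dominator tree that agrees with `δ` on unaffected siblings. Then for every reachable
vertex `v` that is neither affected nor a child of `nca(x,y)` in `D`, `δ'` is a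
low-high order for `v` in the updated graph `G'`. -/
theorem stmt5 (E : V → V → Prop) (s x y z : V) (δ δ' : V → ℕ)
    (hx : Reachable E s x) (hy : Reachable E s y)
    (hz : IsNca E s z x y)
    (hδ : IsLowHigh E s δ)
    (hδ' : IsPreorderOfD (Ins E x y) s δ')
    (hagree : ∀ u v q, Reachable E s u → Reachable E s v → u ≠ v →
      ¬ Affected E s x y u → ¬ Affected E s x y v →
      IsIdom E s q u → IsIdom E s q v →
      (δ' u < δ' v ↔ δ u < δ v)) :
    ∀ v, Reachable E s v → v ≠ s → ¬ Affected E s x y v → ¬ IsIdom E s z v →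
      LowHighFor (Ins E x y) s δ' v :=
  stmt5_general E s x y z δ δ' hy hz hδ hδ' hagree

end Dominators
end
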